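/- Let G be a finite simple graph with vertex set V, and let T be a tree on the same vertex set V (a connected acyclic simple graph on V). For an edge e = uv of T, let V_e denote the vertex set of the connected component containing u after deleting e from T, so that removing e partitions V into (V_e, V ∖ V_e). Then for every A ⊆ V, the edge boundary ∂A in G equals the symmetric difference, over all edges e = uv of T with u ∈ A and v ∉ A, of the edge boundaries ∂V_e in G. -/

import Mathlib

open Finset
open scoped Classical

variable {V : Type*}

/-- The edge boundary `∂S`: the set of edges of `G` with exactly one endpoint in `S`. -/
noncomputable def edgeBoundary [Fintype V] [DecidableEq V] (G : SimpleGraph V) (S : Finset V) :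
    Finset (Sym2 V) :=
  Finset.univ.filter fun e => e ∈ G.edgeSet ∧ ∃ u v, e = s(u, v) ∧ u ∈ S ∧ v ∉ S

/-- A cutset of `G` is an edge boundary `∂S` with `∅ ≠ S ≠ V`. -/
def IsCutset [Fintype V] [DecidableEq V] (G : SimpleGraph V) (D : Finset (Sym2 V)) : Prop :=
  ∃ S : Finset V, S ≠ ∅ ∧ S ≠ Finset.univ ∧ D = edgeBoundary G S

/-- Symmetric difference of a finite family of edge sets: the set of edges occurring in an
odd number of members of the family. -/
noncomputable def symmDiffFamily [Fintype V] [DecidableEq V] {ι : Type*} (s : Finset ι)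
    (f : ι → Finset (Sym2 V)) : Finset (Sym2 V) :=
  Finset.univ.filter fun e => Odd ((s.filter fun i => e ∈ f i).card)

/-- A cut basis: a family of `n - 1` cutsets such that every element of the cut space is the
symmetric difference of a subfamily, and no nonempty subfamily has empty symmetric
difference. -/
def IsCutBasis [Fintype V] [DecidableEq V] (G : SimpleGraph V)
    (𝒟 : Finset (Finset (Sym2 V))) : Prop :=
  𝒟.card = Fintype.card V - 1 ∧
  (∀ D ∈ 𝒟, IsCutset G D) ∧
  (∀ S : Finset V, ∃ ℬ ⊆ 𝒟, edgeBoundary G S = symmDiffFamily ℬ id) ∧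
  (∀ ℬ ⊆ 𝒟, ℬ.Nonempty → symmDiffFamily ℬ id ≠ ∅)

/-- The weight `|D|` of an edge set `D`. -/
def weight (w : Sym2 V → ℝ) (D : Finset (Sym2 V)) : ℝ :=
  ∑ e ∈ D, w e

/-- A minimum cut basis: a cut basis of minimum total weight. -/
def IsMinCutBasis [Fintype V] [DecidableEq V] (G : SimpleGraph V) (w : Sym2 V → ℝ)
    (𝒟 : Finset (Finset (Sym2 V))) : Prop :=
  IsCutBasis G 𝒟 ∧
  ∀ 𝒟' : Finset (Finset (Sym2 V)), IsCutBasis G 𝒟' →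
    ∑ D ∈ 𝒟, weight w D ≤ ∑ D ∈ 𝒟', weight w D

/-- A cutset is relevant if it belongs to at least one minimum cut basis. -/
def IsRelevant [Fintype V] [DecidableEq V] (G : SimpleGraph V) (w : Sym2 V → ℝ)
    (D : Finset (Sym2 V)) : Prop :=
  ∃ 𝒟 : Finset (Finset (Sym2 V)), IsMinCutBasis G w 𝒟 ∧ D ∈ 𝒟

/-- A `u,v`-cut: a cutset of the form `∂S` with `u ∈ S` and `v ∉ S`. -/
def IsUVCut [Fintype V] [DecidableEq V] (G : SimpleGraph V) (u v : V)
    (D : Finset (Sym2 V)) : Prop :=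
  ∃ S : Finset V, u ∈ S ∧ v ∉ S ∧ D = edgeBoundary G S

/-- A minimum-weight `u,v`-cut. -/
def IsMinUVCut [Fintype V] [DecidableEq V] (G : SimpleGraph V) (w : Sym2 V → ℝ) (u v : V)
    (D : Finset (Sym2 V)) : Prop :=
  IsUVCut G u v D ∧ ∀ D' : Finset (Sym2 V), IsUVCut G u v D' → weight w D ≤ weight w D'

/-- A minimum `u,v`-cut with respect to unit weights (cardinality). -/
def IsMinUVCutCard [Fintype V] [DecidableEq V] (G : SimpleGraph V) (u v : V)
    (D : Finset (Sym2 V)) : Prop :=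
  IsUVCut G u v D ∧ ∀ D' : Finset (Sym2 V), IsUVCut G u v D' → D.card ≤ D'.card

/-
Over `𝔽₂` the boundary map `S ↦ ∂S` is linear, so the symmetric difference of the boundaries
`∂V_e` is the boundary of the set `B` of vertices lying in an odd number of the sides `V_e`.
Across a tree edge `xy`, the only side separating `x` from `y` is the one cut out by `xy`
itself, and it occurs in the family exactly when `xy` crosses `A`. Hence membership in `B` and
in `A` change along the same tree edges; as `T` is connected, `B = A` or `B = Aᶜ`, and both
have boundary `∂A`.
-/

theorem mem_edgeBoundary_mk [Fintype V] [DecidableEq V] {G : SimpleGraph V} {S : Finset V}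
    {x y : V} : s(x, y) ∈ edgeBoundary G S ↔ G.Adj x y ∧ Xor (x ∈ S) (y ∈ S) := by
  simp only [edgeBoundary, mem_filter, mem_univ, true_and, SimpleGraph.mem_edgeSet, Sym2.eq_iff]
  constructor
  · rintro ⟨hxy, u, v, ⟨rfl, rfl⟩ | ⟨rfl, rfl⟩, hu, hv⟩
    exacts [⟨hxy, .inl ⟨hu, hv⟩⟩, ⟨hxy, .inr ⟨hu, hv⟩⟩]
  · rintro ⟨hxy, ⟨hx, hy⟩ | ⟨hy, hx⟩⟩
    exacts [⟨hxy, x, y, .inl ⟨rfl, rfl⟩, hx, hy⟩, ⟨hxy, y, x, .inr ⟨rfl, rfl⟩, hy, hx⟩]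

theorem edgeBoundary_compl [Fintype V] [DecidableEq V] (G : SimpleGraph V) (S : Finset V) :
    edgeBoundary G Sᶜ = edgeBoundary G S := by
  ext e
  induction e using Sym2.ind with
  | _ x y => simp only [mem_edgeBoundary_mk, mem_compl, xor_not_not]

theorem odd_card_filter_xor {ι : Type*} (s : Finset ι) (P Q : ι → Prop) [DecidablePred P]
    [DecidablePred Q] :
    Odd #(s.filter fun i => Xor (P i) (Q i)) ↔ Xor (Odd #(s.filter P)) (Odd #(s.filter Q)) := by
  simp only [← ZMod.natCast_eq_one_iff_odd, natCast_card_filter]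
  have hxor : ∀ i, (if Xor (P i) (Q i) then 1 else 0 : ZMod 2) =
      (if P i then 1 else 0) + (if Q i then 1 else 0) := by
    intro i
    by_cases hP : P i <;> by_cases hQ : Q i <;> simp [hP, hQ]
    decide
  rw [sum_congr rfl fun i _ => hxor i, sum_add_distrib]
  generalize ∑ i ∈ s, (if P i then 1 else 0 : ZMod 2) = a
  generalize ∑ i ∈ s, (if Q i then 1 else 0 : ZMod 2) = b
  revert a b
  decide

noncomputable def oddCover [Fintype V] [DecidableEq V] {ι : Type*} (s : Finset ι) (S : ι → Finset V) :
    Finset V :=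
  univ.filter fun v => Odd #(s.filter fun i => v ∈ S i)

theorem symmDiffFamily_edgeBoundary [Fintype V] [DecidableEq V] (G : SimpleGraph V)
    {ι : Type*} (s : Finset ι) (S : ι → Finset V) :
    symmDiffFamily s (fun i => edgeBoundary G (S i)) = edgeBoundary G (oddCover s S) := by
  ext e
  induction e using Sym2.ind with
  | _ x y =>
    by_cases hxy : G.Adj x y
    · simp only [symmDiffFamily, oddCover, mem_filter, mem_univ, true_and, mem_edgeBoundary_mk,
        hxy, odd_card_filter_xor]
    · simp [symmDiffFamily, mem_edgeBoundary_mk, hxy]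

theorem SimpleGraph.Preconnected.apply_eq_of_forall_adj {α : Type*} {G : SimpleGraph V}
    (hG : G.Preconnected) {f : V → α} (hf : ∀ x y, G.Adj x y → f x = f y) (x y : V) :
    f x = f y := by
  obtain ⟨w⟩ := hG x y
  induction w with
  | nil => rfl
  | cons h _ ih => exact (hf _ _ h).trans ih

theorem eq_or_eq_compl_of_forall_adj_xor [Fintype V] [DecidableEq V] {G : SimpleGraph V}
    (hG : G.Preconnected) {A B : Finset V}
    (h : ∀ x y, G.Adj x y → (Xor (x ∈ B) (y ∈ B) ↔ Xor (x ∈ A) (y ∈ A))) :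
    B = A ∨ B = Aᶜ := by
  have hconst := hG.apply_eq_of_forall_adj (f := fun v => (v ∈ B ↔ v ∈ A)) fun x y hxy => by
    have := h x y hxy
    simp only [xor_iff_not_iff] at this
    exact propext (by tauto)
  by_cases hB : ∀ v, v ∈ B ↔ v ∈ A
  · exact .inl (ext hB)
  · obtain ⟨v, hv⟩ := not_forall.mp hB
    refine .inr (ext fun w => ?_)
    have := hconst v w
    simp only [mem_compl]
    tauto

noncomputable def cutSide [Fintype V] [DecidableEq V] (T : SimpleGraph V) (u v : V) : Finset V :=
  univ.filter fun x => (T.deleteEdges {s(u, v)}).Reachable u x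

theorem xor_mem_cutSide_iff [Fintype V] [DecidableEq V] {T : SimpleGraph V} (hT : T.IsAcyclic) {u v x y : V}
    (huv : T.Adj u v) (hxy : T.Adj x y) :
    Xor (x ∈ cutSide T u v) (y ∈ cutSide T u v) ↔ s(x, y) = s(u, v) := by
  have hu : u ∈ cutSide T u v := by simp [cutSide]
  have hv : v ∉ cutSide T u v := by
    simpa [cutSide] using SimpleGraph.isBridge_iff.mp
      (SimpleGraph.isAcyclic_iff_forall_adj_isBridge.mp hT huv)
  by_cases he : s(x, y) = s(u, v)
  · rcases Sym2.eq_iff.mp he with ⟨rfl, rfl⟩ | ⟨rfl, rfl⟩ <;> simp [Xor, hu, hv]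
  · have hadj : (T.deleteEdges {s(u, v)}).Adj x y := by simp [hxy, he]
    simp only [he, iff_false, xor_iff_not_iff, not_not, cutSide, mem_filter, mem_univ, true_and]
    exact ⟨fun h => h.trans hadj.reachable, fun h => h.trans hadj.symm.reachable⟩

noncomputable def crossingEdges [Fintype V] [DecidableEq V] (T : SimpleGraph V) (A : Finset V) :
    Finset (V × V) :=
  univ.filter fun p => T.Adj p.1 p.2 ∧ p.1 ∈ A ∧ p.2 ∉ A

theorem odd_card_crossingEdges_filter_iff [Fintype V] [DecidableEq V] {T : SimpleGraph V}
    {x y : V} (hxy : T.Adj x y) (A : Finset V) :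
    Odd #((crossingEdges T A).filter fun p => s(x, y) = s(p.1, p.2)) ↔ Xor (x ∈ A) (y ∈ A) := by
  have hfilter : (crossingEdges T A).filter (fun p => s(x, y) = s(p.1, p.2)) =
      ({(x, y), (y, x)} : Finset (V × V)).filter fun p => p.1 ∈ A ∧ p.2 ∉ A := by
    ext ⟨a, b⟩
    simp only [crossingEdges, mem_filter, mem_univ, true_and, Sym2.eq_iff, mem_insert,
      mem_singleton, Prod.mk.injEq]
    constructor
    · rintro ⟨⟨-, ha, hb⟩, ⟨rfl, rfl⟩ | ⟨rfl, rfl⟩⟩ <;> simp_all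
    · rintro ⟨⟨rfl, rfl⟩ | ⟨rfl, rfl⟩, ha, hb⟩ <;> simp_all [hxy.symm]
  rw [hfilter]
  by_cases hx : x ∈ A <;> by_cases hy : y ∈ A <;> simp [filter_insert, filter_singleton, hx, hy, Xor]

theorem oddCover_cutSide_crossingEdges [Fintype V] [DecidableEq V] {T : SimpleGraph V}
    (hT : T.IsTree) (A : Finset V) :
    oddCover (crossingEdges T A) (fun p => cutSide T p.1 p.2) = A ∨
      oddCover (crossingEdges T A) (fun p => cutSide T p.1 p.2) = Aᶜ := by
  refine eq_or_eq_compl_of_forall_adj_xor hT.connected.preconnected fun x y hxy => ?_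
  have hside : ∀ p ∈ crossingEdges T A,
      Xor (x ∈ cutSide T p.1 p.2) (y ∈ cutSide T p.1 p.2) ↔ s(x, y) = s(p.1, p.2) :=
    fun p hp => xor_mem_cutSide_iff hT.isAcyclic (mem_filter.mp hp).2.1 hxy
  simp only [oddCover, mem_filter, mem_univ, true_and, ← odd_card_filter_xor,
    filter_congr hside, odd_card_crossingEdges_filter_iff hxy]

/-- Let `G` be a finite simple graph on `V` and `T` a tree on the same vertex set
`V`. For every `A ⊆ V`, the edge boundary `∂A` in `G` is the symmetric difference, over all
edges `uv` of `T` with `u ∈ A` and `v ∉ A`, of the boundaries `∂V_e` in `G`, where `V_e` is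
the vertex set of the component of `u` in `T` minus the edge `uv`. -/
theorem boundary_eq_symmDiff_of_tree_cuts [Fintype V] [DecidableEq V] (G : SimpleGraph V)
    (T : SimpleGraph V) (hT : T.IsTree) (A : Finset V) :
    edgeBoundary G A =
      symmDiffFamily
        (Finset.univ.filter fun p : V × V => T.Adj p.1 p.2 ∧ p.1 ∈ A ∧ p.2 ∉ A)
        (fun p => edgeBoundary G
          (Finset.univ.filter fun x => (T.deleteEdges {s(p.1, p.2)}).Reachable p.1 x)) := by
  change _ = symmDiffFamily (crossingEdges T A) fun p => edgeBoundary G (cutSide T p.1 p.2)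
  rw [symmDiffFamily_edgeBoundary]
  rcases oddCover_cutSide_crossingEdges hT A with h | h
  · rw [h]
  · rw [h, edgeBoundary_compl]
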